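/- Let n ≥ 1, let α ⊆ {1,…,n} be nonempty with m := |α|, let π be a permutation of α, and let B(α,π) and E(α) be the associated circuit matrix and diagonal matrix. Then there exist an n×n permutation matrix Q and an m×m permutation matrix P such that Qᵀ (E(α) − B(α,π)) Q equals the block-diagonal matrix with upper-left m×m block I_m − P and all remaining entries zero. -/

import Mathlib

open Matrix

/-- The circuit matrix `B(α, π)`: entries `1` if `i, j ∈ α` and `j = π i`, else `0`. -/
def circuitMatrix (n : ℕ) (α : Finset (Fin n)) (e : Equiv.Perm (Fin n)) :
    Matrix (Fin n) (Fin n) ℝ :=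
  Matrix.of fun i j => if i ∈ α ∧ j ∈ α ∧ j = e i then 1 else 0

/-- The diagonal 0–1 matrix `E(α)` with `E_{ii} = 1` exactly for `i ∈ α`. -/
def diagE (n : ℕ) (α : Finset (Fin n)) : Matrix (Fin n) (Fin n) ℝ :=
  Matrix.of fun i j => if i = j ∧ i ∈ α then 1 else 0

/-! Relabel `Fin n` by a permutation that carries the initial segment `{0, …, m - 1}` onto `α`
and the rest onto the complement of `α`; conjugating by its permutation matrix permutes rows and
columns simultaneously. All rows and columns of `E(α) − B(α, π)` outside `α` vanish, and since `π`
preserves `α` it restricts to a permutation of `α`, whose matrix `P` gives the block `I − P`. -/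

open Equiv Finset

namespace Equiv.Perm

variable {ι κ R : Type*} [DecidableEq ι] [DecidableEq κ]

lemma permMatrix_apply [Zero R] [One R] (σ : Perm ι) (i j : ι) :
    σ.permMatrix R i j = if j = σ i then 1 else 0 := by
  simp [PEquiv.toMatrix_apply, eq_comm]

lemma submatrix_one_sub_permMatrix [Ring R] (g : κ ≃ ι) (σ : Perm ι) :
    (1 - σ.permMatrix R).submatrix g g = 1 - (g.symm.permCongr σ).permMatrix R := by
  ext a b
  simp [Matrix.one_apply, permCongr_apply, symm_apply_eq]

theorem transpose_permMatrix_mul_mul_permMatrix [Fintype ι] [NonAssocSemiring R] (σ : Perm ι)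
    (M : Matrix ι ι R) :
    (σ.permMatrix R)ᵀ * M * σ.permMatrix R = M.submatrix σ.symm σ.symm := by
  rw [transpose_permMatrix, permMatrix, permMatrix, PEquiv.toMatrix_toPEquiv_mul,
    PEquiv.mul_toMatrix_toPEquiv, submatrix_submatrix]
  rfl

end Equiv.Perm

section

variable {n : ℕ}

theorem Finset.exists_perm_fin_initialSegment (α : Finset (Fin n)) :
    ∃ (σ : Perm (Fin n)) (g : Fin #α ≃ α),
      (∀ (i : Fin n) (hi : (i : ℕ) < #α), σ i = g ⟨i, hi⟩) ∧
        ∀ i : Fin n, ¬(i : ℕ) < #α → σ i ∉ α := by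
  let g : Fin #α ≃ α := α.equivFin.symm
  let σ := ((Fin.castLEquiv (by simpa using α.card_le_univ)).symm.trans g).extendSubtype
  exact ⟨σ, g, fun i hi => extendSubtype_apply_of_mem _ i hi, extendSubtype_not_mem _⟩

variable {α : Finset (Fin n)} {e : Perm (Fin n)}

lemma diagE_sub_circuitMatrix_of_notMem_left {i : Fin n} (hi : i ∉ α) (j : Fin n) :
    (diagE n α - circuitMatrix n α e) i j = 0 := by
  simp [diagE, circuitMatrix, hi]

lemma diagE_sub_circuitMatrix_of_notMem_right (i : Fin n) {j : Fin n} (hj : j ∉ α) :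
    (diagE n α - circuitMatrix n α e) i j = 0 := by
  simp only [diagE, circuitMatrix, Matrix.sub_apply, of_apply, hj, and_false, false_and, ite_false,
    sub_zero, ite_eq_right_iff, one_ne_zero, imp_false, not_and]
  rintro rfl
  exact hj

lemma diagE_sub_circuitMatrix_apply_coe (he : ∀ i, i ∈ α ↔ e i ∈ α) (a b : α) :
    (diagE n α - circuitMatrix n α e) a b =
      (1 - (e.subtypePerm fun i => (he i).symm).permMatrix ℝ) a b := by
  simp only [diagE, circuitMatrix, Matrix.sub_apply, of_apply, Perm.permMatrix_apply,
    Matrix.one_apply, Subtype.ext_iff, Perm.subtypePerm_apply, a.2, b.2, and_true, true_and]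

end

theorem circuit_matrix_block_form (n : ℕ)
    (α : Finset (Fin n))
    (e : Equiv.Perm (Fin n)) (he : ∀ i, i ∈ α ↔ e i ∈ α) :
    ∃ (q : Equiv.Perm (Fin n)) (p : Equiv.Perm (Fin α.card)),
      (q.permMatrix ℝ)ᵀ * (diagE n α - circuitMatrix n α e) * (q.permMatrix ℝ) =
        Matrix.of (fun i j : Fin n =>
          if hi : (i : ℕ) < α.card then
            if hj : (j : ℕ) < α.card then
              ((1 : Matrix (Fin α.card) (Fin α.card) ℝ) - p.permMatrix ℝ) ⟨i, hi⟩ ⟨j, hj⟩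
            else 0
          else 0) := by
  obtain ⟨σ, g, hσg, hσ⟩ := α.exists_perm_fin_initialSegment
  refine ⟨σ.symm, g.symm.permCongr (e.subtypePerm fun i => (he i).symm), ?_⟩
  rw [Perm.transpose_permMatrix_mul_mul_permMatrix, symm_symm]
  ext i j
  simp only [submatrix_apply, of_apply]
  split_ifs with hi hj
  · rw [hσg i hi, hσg j hj, diagE_sub_circuitMatrix_apply_coe he]
    exact congrFun₂ (Perm.submatrix_one_sub_permMatrix g _) _ _
  · exact diagE_sub_circuitMatrix_of_notMem_right _ (hσ j hj)
  · exact diagE_sub_circuitMatrix_of_notMem_left (hσ i hi) _
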